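/- arXiv:2003.02677 — 3 statements merged into one kernel-verified Lean document; each statement's English description precedes it below -/
import Mathlib

section
/- Let 0 < α < 1, β > 0 and 1 ≤ s < t. Then (1/Γ(1-α)) · (1/Γ(β)) · ∫_s^t (ln(t/r))^{-α} (ln(r/s))^{β-1} dr/r = (ln t - ln s)^{β-α} / Γ(β-α+1). -/
open Real MeasureTheory intervalIntegral

/-!
Substituting `r = exp u` turns the integral into
`∫_{log s}^{log t} (log t - u)^(-α) (u - log s)^(β-1) du`, and the affine change `u = log s + (log t - log s) x` turns that into
`(log t - log s)^(β-α)` times the Beta integral `B(β, 1 - α) = Γ(β) Γ(1-α) / Γ(β-α+1)`.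
-/

theorem integral_rpow_mul_one_sub_rpow {u v : ℝ} (hu : 0 < u) (hv : 0 < v) :
    ∫ x in (0 : ℝ)..1, x ^ (u - 1) * (1 - x) ^ (v - 1) = Gamma u * Gamma v / Gamma (u + v) := by
  have hB := Complex.betaIntegral_eq_Gamma_mul_div u v (by simpa using hu) (by simpa using hv)
  rw [Complex.betaIntegral, ← Complex.ofReal_add, Complex.Gamma_ofReal, Complex.Gamma_ofReal,
    Complex.Gamma_ofReal] at hB
  refine Complex.ofReal_injective ?_
  rw [← intervalIntegral.integral_ofReal, Complex.ofReal_div, Complex.ofReal_mul, ← hB]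
  refine intervalIntegral.integral_congr fun x hx => ?_
  rw [Set.uIcc_of_le zero_le_one] at hx
  push_cast
  rw [Complex.ofReal_cpow hx.1, Complex.ofReal_cpow (sub_nonneg.2 hx.2)]
  push_cast
  rfl

theorem integral_sub_rpow_mul_sub_rpow {a b : ℝ} (hab : a < b) (p q : ℝ) :
    ∫ x in a..b, (b - x) ^ p * (x - a) ^ q
      = (b - a) ^ (p + q + 1) * ∫ x in (0 : ℝ)..1, x ^ q * (1 - x) ^ p := by
  have hc : 0 < b - a := sub_pos.2 hab
  have hscale := smul_integral_comp_mul_add (a := 0) (b := 1)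
    (fun x => (b - x) ^ p * (x - a) ^ q) (b - a) a
  rw [mul_zero, zero_add, mul_one, sub_add_cancel, smul_eq_mul] at hscale
  rw [← hscale, rpow_add_one hc.ne', rpow_add hc, mul_comm _ (b - a), mul_assoc]
  congr 1
  rw [← intervalIntegral.integral_const_mul]
  refine intervalIntegral.integral_congr fun x hx => ?_
  rw [Set.uIcc_of_le zero_le_one] at hx
  have hb : b - ((b - a) * x + a) = (b - a) * (1 - x) := by ring
  rw [hb, add_sub_cancel_right, mul_rpow hc.le (sub_nonneg.2 hx.2), mul_rpow hc.le hx.1]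
  ring

theorem integral_comp_log_div {s t : ℝ} (hs : 0 < s) (ht : 0 < t) (g : ℝ → ℝ) :
    ∫ r in s..t, g (log r) / r = ∫ u in log s..log t, g u := by
  have hpos : ∀ r ∈ Set.uIcc s t, 0 < r := fun r hr => (lt_min hs ht).trans_le hr.1
  have := integral_comp_mul_deriv_of_deriv_nonneg (g := g) (f := log) (f' := fun r => r⁻¹)
    (a := s) (b := t) (continuousOn_log.mono fun r hr => (hpos r hr).ne')
    (fun r hr => hasDerivAt_log (hpos r (Set.Ioo_subset_Icc_self hr)).ne')
    (fun r hr => inv_nonneg.2 (hpos r (Set.Ioo_subset_Icc_self hr)).le)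
  simpa [div_eq_mul_inv] using this

theorem hadamard_integral_identity_general (α β s t : ℝ) (hα1 : α < 1) (hβ : 0 < β)
    (hs : 1 ≤ s) (hst : s < t) :
    (Real.Gamma (1 - α))⁻¹ * (Real.Gamma β)⁻¹ *
        ∫ r in s..t, Real.log (t / r) ^ (-α) * Real.log (r / s) ^ (β - 1) / r
      = (Real.log t - Real.log s) ^ (β - α) / Real.Gamma (β - α + 1) := by
  have hs0 : 0 < s := one_pos.trans_le hs
  have ht0 : 0 < t := hs0.trans hst
  have hlog_subst : ∫ r in s..t, log (t / r) ^ (-α) * log (r / s) ^ (β - 1) / r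
      = ∫ u in log s..log t, (log t - u) ^ (-α) * (u - log s) ^ (β - 1) := by
    rw [← integral_comp_log_div hs0 ht0]
    refine intervalIntegral.integral_congr fun r hr => ?_
    have hr0 : 0 < r := (lt_min hs0 ht0).trans_le hr.1
    rw [log_div ht0.ne' hr0.ne', log_div hr0.ne' hs0.ne']
  have hbeta := integral_rpow_mul_one_sub_rpow hβ (sub_pos.2 hα1)
  rw [sub_sub_cancel_left, show β + (1 - α) = β - α + 1 by ring] at hbeta
  rw [hlog_subst, integral_sub_rpow_mul_sub_rpow (log_lt_log hs0 hst), hbeta,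
    show -α + (β - 1) + 1 = β - α by ring]
  field_simp [(Gamma_pos_of_pos (sub_pos.2 hα1)).ne', (Gamma_pos_of_pos hβ).ne']

/-- **A fractional-integral identity with logarithms.** For `0 < α < 1`, `β > 0` and
`1 ≤ s < t`,
`(1/Γ(1-α))·(1/Γ(β))·∫_s^t (ln(t/r))^(-α) (ln(r/s))^(β-1) dr/r
  = (ln t - ln s)^(β-α) / Γ(β-α+1)`. -/
theorem hadamard_integral_identity (α β s t : ℝ) (hα0 : 0 < α) (hα1 : α < 1) (hβ : 0 < β)
    (hs : 1 ≤ s) (hst : s < t) :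
    (Real.Gamma (1 - α))⁻¹ * (Real.Gamma β)⁻¹ *
        ∫ r in s..t, Real.log (t / r) ^ (-α) * Real.log (r / s) ^ (β - 1) / r
      = (Real.log t - Real.log s) ^ (β - α) / Real.Gamma (β - α + 1) :=
  hadamard_integral_identity_general α β s t hα1 hβ hs hst
end

section
/- Let A1 be an n×n real matrix, let A0 = 0 (the zero matrix), let h > 1, 0 < α < 1, β > 0, s ≥ 1, and t > s h^k for an integer k ≥ 0. Then Y_{α,β,k}(t, s h^k) = A1^k (ln(t/(s h^k)))^{kα + β - 1} / Γ(kα + β). -/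
open Real MeasureTheory intervalIntegral Filter

attribute [local instance] Matrix.linftyOpNormedAddCommGroup Matrix.linftyOpNormedRing
  Matrix.linftyOpNormedAlgebra

/-- Mittag-Leffler type matrix function `E_{α,β}(A; z) = ∑_{k=0}^∞ A^k z^{αk}/Γ(kα+β)`. -/
noncomputable def mlE {n : ℕ} (A : Matrix (Fin n) (Fin n) ℝ) (α β z : ℝ) :
    Matrix (Fin n) (Fin n) ℝ :=
  ∑' k : ℕ, (z ^ (α * k) / Real.Gamma (k * α + β)) • A ^ k

/-- The matrices `Y_{α,β,k}(t, u)` (with `u = s·h^k`), defined recursively by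
`Y_{α,β,0}(t,u) = (ln(t/u))^(β-1) E_{α,β}(A0; ln(t/u))` and
`Y_{α,β,k}(t,u) = ∫_u^t e_{α,α}(A0; ln(t/r)) A1 Y_{α,β,k-1}(r/h, u/h) dr/r`, where
`e_{α,α}(A; z) = z^(α-1) E_{α,α}(A; z)`. -/
noncomputable def Ymat {n : ℕ} (A0 A1 : Matrix (Fin n) (Fin n) ℝ) (h α β : ℝ) :
    ℕ → ℝ → ℝ → Matrix (Fin n) (Fin n) ℝ
  | 0 => fun t u => Real.log (t / u) ^ (β - 1) • mlE A0 α β (Real.log (t / u))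
  | (k + 1) => fun t u =>
      ∫ r in u..t, r⁻¹ •
        (Real.log (t / r) ^ (α - 1) • mlE A0 α α (Real.log (t / r))
          * (A1 * Ymat A0 A1 h α β k (r / h) (u / h)))

/-- Delayed Mittag-Leffler type matrix function with logarithm
`Y_{h,α,β}^{A0,A1}(t,s)`: it is `0` for `t < s`, the identity for `t = s`, and equals
`∑_{j=0}^k Y_{α,β,j}(t, s h^j)` for `s h^k < t ≤ s h^{k+1}` (note that in this case
`⌈ln(t/s)/ln h⌉ = k + 1`). -/
noncomputable def Ydel {n : ℕ} (A0 A1 : Matrix (Fin n) (Fin n) ℝ) (h α β : ℝ) (t s : ℝ) :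
    Matrix (Fin n) (Fin n) ℝ :=
  if t < s then 0
  else if t = s then 1
  else ∑ j ∈ Finset.range ⌈Real.log (t / s) / Real.log h⌉₊, Ymat A0 A1 h α β j t (s * h ^ j)


/-! With `A0 = 0` every Mittag-Leffler factor collapses to `E_{α,β}(0; z) = 1/Γ(β)`, so the
recursion for `Y_{α,β,k}` becomes an iterated Hadamard fractional integral of a power of the
logarithm. The delay `h` drops out because `(r/h)/(u/h) = r/u`, so the closed form holds for every
lower limit `u > 0`, and the induction step is a Beta integral: after `r = u eˣ`,
`∫_u^t ln(t/r)^(α-1) ln(r/u)^(γ-1) dr/r = B(α, γ) ln(t/u)^(α+γ-1)`. -/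

lemma mlE_zero_left {n : ℕ} (α β z : ℝ) :
    mlE (0 : Matrix (Fin n) (Fin n) ℝ) α β z = (Gamma β)⁻¹ • 1 := by
  rw [mlE, tsum_eq_single 0 fun k hk => by simp [zero_pow hk]]
  simp

theorem integral_rpow_mul_sub_rpow {a b L : ℝ} (ha : 0 < a) (hb : 0 < b) (hL : 0 < L) :
    ∫ x in (0 : ℝ)..L, x ^ (a - 1) * (L - x) ^ (b - 1)
      = L ^ (a + b - 1) * (Gamma a * Gamma b / Gamma (a + b)) := by
  have hbeta := Complex.betaIntegral_scaled a b hL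
  rw [Complex.betaIntegral_eq_Gamma_mul_div _ _ (by simpa) (by simpa)] at hbeta
  apply Complex.ofReal_injective
  rw [← intervalIntegral.integral_ofReal]
  convert hbeta using 1
  · refine intervalIntegral.integral_congr fun x hx => ?_
    rw [Set.uIcc_of_le hL.le] at hx
    simp only [Complex.ofReal_mul, Complex.ofReal_cpow hx.1,
      Complex.ofReal_cpow (sub_nonneg.2 hx.2)]
    push_cast; rfl
  · rw [← Complex.ofReal_add, Complex.Gamma_ofReal, Complex.Gamma_ofReal, Complex.Gamma_ofReal,
      Complex.ofReal_mul, Complex.ofReal_cpow hL.le]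
    push_cast; rfl

theorem integral_log_rpow_mul_log_rpow_div {α γ u t : ℝ} (hα : 0 < α) (hγ : 0 < γ) (hu : 0 < u)
    (hut : u < t) :
    ∫ r in u..t, log (t / r) ^ (α - 1) * log (r / u) ^ (γ - 1) / r
      = log (t / u) ^ (α + γ - 1) * (Gamma α * Gamma γ / Gamma (α + γ)) := by
  set L := log (t / u)
  have hL : 0 < L := log_pos ((one_lt_div hu).2 hut)
  have hend : u * exp L = t := by rw [exp_log (div_pos (hu.trans hut) hu)]; field_simp
  -- substitute `r = u * exp x`, which turns `dr / r` into `dx`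
  have hsubst := intervalIntegral.integral_comp_mul_deriv_of_deriv_nonneg
    (f := fun x => u * exp x) (f' := fun x => u * exp x)
    (g := fun r => log (t / r) ^ (α - 1) * log (r / u) ^ (γ - 1) / r)
    (continuous_const.mul continuous_exp).continuousOn
    (fun x _ => (hasDerivAt_exp x).const_mul u) (fun x _ => by positivity)
    (a := 0) (b := L)
  simp only [exp_zero, mul_one, hend] at hsubst
  rw [← hsubst, add_comm α γ, mul_comm (Gamma α), ← integral_rpow_mul_sub_rpow hγ hα hL]
  refine intervalIntegral.integral_congr fun x _ => ?_
  have hlog_left : log (t / (u * exp x)) = L - x := by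
    rw [← hend, mul_div_mul_left _ _ hu.ne', div_eq_mul_inv, ← exp_neg, ← exp_add, log_exp]
    ring
  have hlog_right : log (u * exp x / u) = x := by rw [mul_div_cancel_left₀ _ hu.ne', log_exp]
  simp only [Function.comp_apply, hlog_left, hlog_right]
  field_simp

lemma Ymat_zero_left_succ {n : ℕ} (A1 : Matrix (Fin n) (Fin n) ℝ) (h α β : ℝ) (k : ℕ) (t u : ℝ) :
    Ymat 0 A1 h α β (k + 1) t u = ∫ r in u..t,
      (log (t / r) ^ (α - 1) / r / Gamma α) • (A1 * Ymat 0 A1 h α β k (r / h) (u / h)) := by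
  simp only [Ymat, mlE_zero_left, Matrix.smul_mul, Matrix.one_mul, smul_smul]
  congr 1 with r
  ring_nf

theorem Ymat_zero_left {n : ℕ} (A1 : Matrix (Fin n) (Fin n) ℝ) {h α β : ℝ} (hh : 0 < h)
    (hα : 0 < α) (hβ : 0 < β) (k : ℕ) {t u : ℝ} (hu : 0 < u) (hut : u < t) :
    Ymat 0 A1 h α β k t u = (log (t / u) ^ (k * α + β - 1) / Gamma (k * α + β)) • A1 ^ k := by
  induction k generalizing t u with
  | zero => simp [Ymat, mlE_zero_left, smul_smul, div_eq_mul_inv]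
  | succ k ih =>
    set γ := (k : ℝ) * α + β
    have hγ : 0 < γ := by positivity
    have hintegrand : ∀ r ∈ Set.uIoc u t,
        (log (t / r) ^ (α - 1) / r / Gamma α) • (A1 * Ymat 0 A1 h α β k (r / h) (u / h))
          = (log (t / r) ^ (α - 1) * log (r / u) ^ (γ - 1) / r / (Gamma α * Gamma γ))
            • A1 ^ (k + 1) := by
      intro r hr
      rw [Set.uIoc_of_le hut.le] at hr
      rw [ih (div_pos hu hh) (div_lt_div_of_pos_right hr.1 hh), div_div_div_cancel_right₀ hh.ne',
        Matrix.mul_smul, ← pow_succ', smul_smul]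
      congr 1
      field_simp
    have hexp : ((k + 1 : ℕ) : ℝ) * α + β = α + γ := by push_cast; ring
    rw [Ymat_zero_left_succ, integral_congr_ae (ae_of_all _ hintegrand),
      intervalIntegral.integral_smul_const, intervalIntegral.integral_div,
      integral_log_rpow_mul_log_rpow_div hα hγ hu hut, hexp]
    congr 1
    field_simp [(Gamma_pos_of_pos hα).ne', (Gamma_pos_of_pos hγ).ne']

theorem Ymat_eq_of_A0_zero_general (n : ℕ) (A1 : Matrix (Fin n) (Fin n) ℝ) (h α β s t : ℝ) (k : ℕ)
    (hh : 1 < h) (hα0 : 0 < α) (hβ : 0 < β) (hs : 1 ≤ s)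
    (ht : s * h ^ k < t) :
    Ymat (0 : Matrix (Fin n) (Fin n) ℝ) A1 h α β k t (s * h ^ k)
      = (Real.log (t / (s * h ^ k)) ^ (k * α + β - 1) / Real.Gamma (k * α + β)) • A1 ^ k := by
  exact Ymat_zero_left A1 (zero_lt_one.trans hh) hα0 hβ k (by positivity) ht

/-- **Closed form of `Y_{α,β,k}` when `A0 = 0`.** For `h > 1`, `0 < α < 1`, `β > 0`,
`s ≥ 1` and `t > s h^k`,
`Y_{α,β,k}(t, s h^k) = A1^k (ln(t/(s h^k)))^{kα+β-1}/Γ(kα+β)`. -/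
theorem Ymat_eq_of_A0_zero (n : ℕ) (A1 : Matrix (Fin n) (Fin n) ℝ) (h α β s t : ℝ) (k : ℕ)
    (hh : 1 < h) (hα0 : 0 < α) (hα1 : α < 1) (hβ : 0 < β) (hs : 1 ≤ s)
    (ht : s * h ^ k < t) :
    Ymat (0 : Matrix (Fin n) (Fin n) ℝ) A1 h α β k t (s * h ^ k)
      = (Real.log (t / (s * h ^ k)) ^ (k * α + β - 1) / Real.Gamma (k * α + β)) • A1 ^ k :=
  Ymat_eq_of_A0_zero_general n A1 h α β s t k hh hα0 hβ hs ht
end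

section
/- Let A0, A1 be n×n real matrices with A0 A1 = A1 A0, let h > 1, s ≥ 1, and let s h^k < t ≤ s h^{k+1} for an integer k ≥ 0. Then, for α = β = 1, the delayed Mittag-Leffler type function with logarithm is given by Y_{h,1,1}^{A0,A1}(t,s) = ∑_{j=0}^k exp(A0 (ln t - ln(s h^j))) A1^j (ln t - ln(s h^j))^j / j!, where exp denotes the matrix exponential. -/
open Real MeasureTheory intervalIntegral Filter

attribute [local instance] Matrix.linftyOpNormedAddCommGroup Matrix.linftyOpNormedRing
  Matrix.linftyOpNormedAlgebra

/-! For `α = β = 1` the weight `ln(t/r)^(α-1)` is `1` and `E_{1,1}(A; z) = exp(z A)`, so by induction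
`Y_{1,1,j}(t, u) = exp(ln(t/u) A0) A1^j ln(t/u)^j / j!`: in the integrand the two exponentials
merge into `exp(ln(t/u) A0)` because `A1` commutes with `A0`, and what is left is the scalar
integral `∫_u^t ln(r/u)^j / j! dr/r = ln(t/u)^(j+1) / (j+1)!`. The hypothesis
`s h^k < t ≤ s h^(k+1)` makes the number of summands in `Ydel` exactly `k + 1`. -/

theorem mlE_one_one {n : ℕ} (A : Matrix (Fin n) (Fin n) ℝ) (z : ℝ) :
    mlE A 1 1 z = NormedSpace.exp (z • A) := by
  rw [NormedSpace.exp_eq_tsum ℝ, mlE]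
  refine tsum_congr fun k => ?_
  rw [one_mul, Real.rpow_natCast, mul_one, Real.Gamma_nat_eq_factorial, smul_pow, smul_smul,
    div_eq_inv_mul]

theorem Matrix.exp_mul_mul_exp_mul {m 𝕂 : Type*} [Fintype m] [DecidableEq m] [RCLike 𝕂]
    {x y b : Matrix m m 𝕂} (hxy : Commute x y) (hyb : Commute y b) (c : Matrix m m 𝕂) :
    NormedSpace.exp x * (b * (NormedSpace.exp y * c)) = NormedSpace.exp (x + y) * (b * c) := by
  rw [Matrix.exp_add_of_commute x y hxy, ← mul_assoc b, ← hyb.exp_left.eq]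
  simp only [mul_assoc]

theorem integral_inv_mul_log_div_pow_div_factorial {u t : ℝ} (hu : 0 < u) (hut : u ≤ t) (j : ℕ) :
    ∫ r in u..t, r⁻¹ * (Real.log (r / u) ^ j / j.factorial)
      = Real.log (t / u) ^ (j + 1) / (j + 1).factorial := by
  have hpos : ∀ r ∈ Set.uIcc u t, 0 < r := fun r hr =>
    hu.trans_le (Set.uIcc_of_le hut ▸ hr).1
  have hderiv : ∀ r ∈ Set.uIcc u t,
      HasDerivAt (fun x => Real.log (x / u) ^ (j + 1) / (j + 1).factorial)
        (r⁻¹ * (Real.log (r / u) ^ j / j.factorial)) r := by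
    intro r hr
    have hlog : HasDerivAt (fun x => Real.log (x / u)) r⁻¹ r := by
      refine ((hasDerivAt_id' r).div_const u).log ?_ |>.congr_deriv ?_
      · exact div_ne_zero (hpos r hr).ne' hu.ne'
      · field_simp
    refine (hlog.pow (j + 1)).div_const ((j + 1).factorial : ℝ) |>.congr_deriv ?_
    rw [Nat.factorial_succ]
    push_cast
    field_simp
  have hcont : ContinuousOn (fun r => r⁻¹ * (Real.log (r / u) ^ j / j.factorial))
      (Set.uIcc u t) := by
    refine ContinuousOn.mul (continuousOn_inv₀.mono fun r hr => (hpos r hr).ne') ?_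
    refine ContinuousOn.div_const (ContinuousOn.pow ?_ _) _
    exact Real.continuousOn_log.comp (continuousOn_id.div_const u)
      fun r hr => div_ne_zero (hpos r hr).ne' hu.ne'
  rw [integral_eq_sub_of_hasDerivAt hderiv hcont.intervalIntegrable, div_self hu.ne',
    Real.log_one, zero_pow j.succ_ne_zero, zero_div, sub_zero]

theorem ceil_log_div_log_eq {h s t : ℝ} {k : ℕ} (hh : 1 < h) (hs : 0 < s)
    (ht1 : s * h ^ k < t) (ht2 : t ≤ s * h ^ (k + 1)) :
    ⌈Real.log (t / s) / Real.log h⌉₊ = k + 1 := by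
  have hlogh : 0 < Real.log h := Real.log_pos hh
  have hhk : 0 < s * h ^ k := by have := hh.trans' one_pos; positivity
  have hts : 0 < t / s := div_pos (hhk.trans ht1) hs
  rw [Nat.ceil_eq_iff k.succ_ne_zero, Nat.succ_sub_one, lt_div_iff₀ hlogh, div_le_iff₀ hlogh,
    ← Real.log_pow, ← Real.log_pow]
  constructor
  · exact Real.log_lt_log (by positivity) ((lt_div_iff₀' hs).2 ht1)
  · exact Real.log_le_log hts ((div_le_iff₀' hs).2 (by exact_mod_cast ht2))

theorem Ymat_one_one {n : ℕ} {A0 A1 : Matrix (Fin n) (Fin n) ℝ} (hcomm : Commute A0 A1) {h : ℝ}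
    (hh : 0 < h) (j : ℕ) {t u : ℝ} (hu : 0 < u) (hut : u ≤ t) :
    Ymat A0 A1 h 1 1 j t u
      = NormedSpace.exp (Real.log (t / u) • A0)
          * ((Real.log (t / u) ^ j / j.factorial) • A1 ^ j) := by
  induction j generalizing t u with
  | zero => simp [Ymat, mlE_one_one]
  | succ j ih =>
    have hintegrand : ∀ r ∈ Set.uIcc u t,
        r⁻¹ • (Real.log (t / r) ^ ((1 : ℝ) - 1) • mlE A0 1 1 (Real.log (t / r))
            * (A1 * Ymat A0 A1 h 1 1 j (r / h) (u / h)))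
          = (r⁻¹ * (Real.log (r / u) ^ j / j.factorial)) •
              (NormedSpace.exp (Real.log (t / u) • A0) * A1 ^ (j + 1)) := by
      intro r hr
      rw [Set.uIcc_of_le hut] at hr
      have hr0 : 0 < r := hu.trans_le hr.1
      have ht0 : 0 < t := hr0.trans_le hr.2
      have hlog : Real.log (t / r) + Real.log (r / u) = Real.log (t / u) := by
        rw [← Real.log_mul (by positivity) (by positivity), div_mul_div_cancel₀ hr0.ne']
      rw [ih (by positivity) (div_le_div_of_nonneg_right hr.1 hh.le),
        div_div_div_cancel_right₀ hh.ne', sub_self, Real.rpow_zero, one_smul, mlE_one_one,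
        Matrix.exp_mul_mul_exp_mul (((Commute.refl A0).smul_left _).smul_right _)
          (hcomm.smul_left _),
        ← add_smul, hlog, mul_smul_comm, mul_smul_comm, ← pow_succ', smul_smul]
    dsimp only [Ymat]
    rw [integral_congr hintegrand, intervalIntegral.integral_smul_const,
      integral_inv_mul_log_div_pow_div_factorial hu hut, mul_smul_comm]

/-- **Lemma 4 (iii): the case `α = β = 1` with permutable matrices.** If `A0 A1 = A1 A0`,
`h > 1`, `s ≥ 1` and `s h^k < t ≤ s h^{k+1}` for an integer `k ≥ 0`, then
`Y_{h,1,1}^{A0,A1}(t,s) = ∑_{j=0}^k exp(A0 (ln t - ln(s h^j))) A1^j (ln t - ln(s h^j))^j/j!`. -/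
theorem Ydel_eq_of_order_one (n : ℕ) (A0 A1 : Matrix (Fin n) (Fin n) ℝ) (h s t : ℝ) (k : ℕ)
    (hcomm : A0 * A1 = A1 * A0) (hh : 1 < h) (hs : 1 ≤ s)
    (ht1 : s * h ^ k < t) (ht2 : t ≤ s * h ^ (k + 1)) :
    Ydel A0 A1 h 1 1 t s
      = ∑ j ∈ Finset.range (k + 1),
          NormedSpace.exp ((Real.log t - Real.log (s * h ^ j)) • A0) *
            (((Real.log t - Real.log (s * h ^ j)) ^ j / (j.factorial : ℝ)) • A1 ^ j) := by
  have hh0 : 0 < h := one_pos.trans hh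
  have hs0 : 0 < s := one_pos.trans_le hs
  have hst : s < t := (le_mul_of_one_le_right hs0.le (one_le_pow₀ hh.le)).trans_lt ht1
  rw [Ydel, if_neg hst.not_gt, if_neg hst.ne', ceil_log_div_log_eq hh hs0 ht1 ht2]
  refine Finset.sum_congr rfl fun j hj => ?_
  have hshj : s * h ^ j ≤ t :=
    (mul_le_mul_of_nonneg_left (pow_le_pow_right₀ hh.le (Finset.mem_range_succ_iff.mp hj))
      hs0.le).trans ht1.le
  rw [Ymat_one_one hcomm hh0 j (by positivity) hshj,
    Real.log_div (hs0.trans hst).ne' (by positivity)]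
end
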